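/- arXiv:2503.14947 — 3 statements merged into one kernel-verified Lean document; each statement's English description precedes it below -/
import Mathlib

section
/- With ‖·‖_{*,λ} as above, if (0,0) minimizes F(u,v) = |u|_BV + (α/2)‖f−u−v‖² + λ‖v‖_{Lip*}, then ‖f‖_{*,λ} ≤ 1/α. -/
open MeasureTheory RealInnerProductSpace

noncomputable section

variable {X : Type*} [NormedAddCommGroup X] [InnerProductSpace ℝ X]

/-- The dual-type norm `‖w‖_{*,λ} = sup ⟨w, g+h⟩/(|g|_BV + λ‖h‖_{Lip*})`,
formulated for abstract convex positively homogeneous functionals `J` (the `BV`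
seminorm) and `L` (the dual Lipschitz norm), with `h` ranging over the
zero-mean subspace `H`. -/
def starNorm (J L : X → ℝ) (H : Submodule ℝ X) (lam : ℝ) (w : X) : ℝ :=
  sSup {r : ℝ | ∃ g h : X, h ∈ H ∧ J g + lam * L h ≠ 0 ∧
    r = ⟪w, g + h⟫ / (J g + lam * L h)}

/-- The functional `F(u,v) = |u|_BV + (α/2)‖f−u−v‖² + λ‖v‖_{Lip*}`. -/
def Fen (J L : X → ℝ) (α lam : ℝ) (f u v : X) : ℝ :=
  J u + α / 2 * ‖f - u - v‖^2 + lam * L v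

end

open MeasureTheory RealInnerProductSpace in
/-- If `(0,0)` minimizes `F(u,v) = |u|_BV + (α/2)‖f−u−v‖² + λ‖v‖_{Lip*}` over
`BV × H`, then `‖f‖_{*,λ} ≤ 1/α`. -/
theorem starNorm_le_of_zero_minimizer
    {X : Type*} [NormedAddCommGroup X] [InnerProductSpace ℝ X]
    (J L : X → ℝ) (H : Submodule ℝ X) (α lam : ℝ) (hα : 0 < α) (hlam : 0 < lam)
    (hJnn : ∀ x, 0 ≤ J x) (hLnn : ∀ x, 0 ≤ L x)
    (hJhom : ∀ (c : ℝ) (x : X), J (c • x) = |c| * J x)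
    (hLhom : ∀ (c : ℝ) (x : X), L (c • x) = |c| * L x)
    (hJconv : ConvexOn ℝ Set.univ J) (hLconv : ConvexOn ℝ Set.univ L)
    (f : X)
    (hmin : ∀ u v : X, v ∈ H → Fen J L α lam f 0 0 ≤ Fen J L α lam f u v) :
    starNorm J L H lam f ≤ 1 / α := by
  have hα' : (0:ℝ) < 1 / α := by positivity
  apply Real.sSup_le _ hα'.le
  rintro r ⟨g, h, hH, hne, rfl⟩
  set D : ℝ := J g + lam * L h with hD
  have hDnn : 0 ≤ D := add_nonneg (hJnn g) (mul_nonneg hlam.le (hLnn h))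
  have hDpos : 0 < D := lt_of_le_of_ne hDnn (Ne.symm hne)
  set s : X := g + h with hs
  -- key: α * ⟪f, s⟫ ≤ D
  have key : α * ⟪f, s⟫ ≤ D := by
    apply le_of_forall_pos_le_add
    intro δ hδ
    set ε : ℝ := δ / (1 + α / 2 * ‖s‖ ^ 2) with hε
    have hden : (0:ℝ) < 1 + α / 2 * ‖s‖ ^ 2 := by positivity
    have hεpos : 0 < ε := div_pos hδ hden
    have hmin' := hmin (ε • g) (ε • h) (H.smul_mem ε hH)
    simp only [Fen, hJhom, hLhom, norm_zero] at hmin'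
    have hsub : f - ε • g - ε • h = f - ε • s := by
      rw [hs, smul_add]; abel
    rw [hsub, norm_sub_sq_real f (ε • s), real_inner_smul_right, norm_smul] at hmin'
    rw [Real.norm_eq_abs, abs_of_pos hεpos] at hmin'
    have h0 : J 0 = 0 := by have := hJhom 0 0; simpa using this
    have hL0 : L 0 = 0 := by have := hLhom 0 0; simpa using this
    rw [h0, hL0] at hmin'
    have hf00 : f - 0 - 0 = f := by abel
    rw [hf00] at hmin'
    have hεδ : (1 + α / 2 * ‖s‖ ^ 2) * ε = δ := by
      rw [hε]; field_simp
    have h3 : α / 2 * ε * ‖s‖ ^ 2 ≤ δ := by nlinarith [hεδ, hεpos.le]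
    have h1 : ε * (α * inner ℝ f s) ≤ ε * (D + δ) := by
      nlinarith [hmin', hεpos.le, mul_le_mul_of_nonneg_left h3 hεpos.le, hD]
    exact le_of_mul_le_mul_left h1 hεpos
  rw [div_le_div_iff₀ hDpos hα]
  nlinarith [key]
end

section
/- Suppose ‖f‖_{*,λ} > 1/α and (u,v) minimizes F(u,v) = |u|_BV + (α/2)‖f−u−v‖² + λ‖v‖_{Lip*}; set w = f−u−v. Then ‖w‖_{*,λ} = 1/α and ⟨w, u+v⟩ = (1/α)(|u|_BV + λ‖v‖_{Lip*}). -/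
open MeasureTheory RealInnerProductSpace

section Aux

variable {X : Type*} [NormedAddCommGroup X] [InnerProductSpace ℝ X]

/-- A convex positively homogeneous functional is subadditive. -/
private lemma subadd' {J : X → ℝ} (hJhom : ∀ (c : ℝ) (x : X), J (c • x) = |c| * J x)
    (hJconv : ConvexOn ℝ Set.univ J) (x y : X) : J (x + y) ≤ J x + J y := by
  have h := hJconv.2 (Set.mem_univ x) (Set.mem_univ y)
    (by norm_num : (0:ℝ) ≤ 1/2) (by norm_num : (0:ℝ) ≤ 1/2) (by norm_num)
  have h2 : (1/2 : ℝ) • x + (1/2 : ℝ) • y = (1/2 : ℝ) • (x + y) := by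
    rw [smul_add]
  rw [h2, hJhom, abs_of_pos (by norm_num : (0:ℝ) < 1/2)] at h
  simp only [smul_eq_mul] at h
  linarith

/-- Adding a null vector does not change the value. -/
private lemma null_add' {J : X → ℝ} (hJhom : ∀ (c : ℝ) (x : X), J (c • x) = |c| * J x)
    (hJconv : ConvexOn ℝ Set.univ J) {x : X} (hx : J x = 0) (y : X) :
    J (x + y) = J y := by
  have hnx : J (-x) = 0 := by
    have := hJhom (-1) x
    rw [neg_one_smul] at this
    simp [this, hx]
  refine le_antisymm ?_ ?_
  · have := subadd' hJhom hJconv x y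
    rw [hx] at this; linarith
  · have := subadd' hJhom hJconv (x + y) (-x)
    rw [hnx] at this
    have hxy : x + y + -x = y := by abel
    rw [hxy] at this; linarith

private lemma nonneg_of_eps {A B : ℝ} (hB : 0 ≤ B)
    (h : ∀ ε : ℝ, 0 < ε → ε ≤ 1 → 0 ≤ ε * A + ε^2 * B) : 0 ≤ A := by
  by_contra hA
  push_neg at hA
  rcases eq_or_lt_of_le hB with hB0 | hB0
  · have := h 1 one_pos le_rfl
    nlinarith
  · set ε := min 1 (-A / (2*B)) with hε
    have hεpos : 0 < ε := lt_min one_pos (div_pos (by linarith) (by linarith))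
    have hle : ε ≤ -A/(2*B) := min_le_right _ _
    have hεB : ε * B ≤ -A/2 := by
      calc ε * B ≤ (-A/(2*B)) * B := mul_le_mul_of_nonneg_right hle hB0.le
        _ = -A/2 := by field_simp
    have h0 := h ε hεpos (min_le_left _ _)
    nlinarith [mul_le_mul_of_nonneg_left hεB hεpos.le]

private lemma nonpos_of_eps {t C : ℝ} (h : ∀ ε : ℝ, 0 < ε → t ≤ ε * C) : t ≤ 0 := by
  by_contra ht
  push_neg at ht
  rcases le_or_gt C 0 with hC | hC
  · have := h 1 one_pos; nlinarith
  · have h1 := h (t/(2*C)) (by positivity)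
    have h2 : (t/(2*C)) * C = t/2 := by field_simp
    rw [h2] at h1; linarith

end Aux

open MeasureTheory RealInnerProductSpace in
/-- Characterization of minimizers: suppose `‖f‖_{*,λ} > 1/α` and `(u,v)`
minimizes `F(u,v) = |u|_BV + (α/2)‖f−u−v‖² + λ‖v‖_{Lip*}` over `BV × H`; set
`w = f−u−v`.  Then `‖w‖_{*,λ} = 1/α` and
`⟨w, u+v⟩ = (1/α)(|u|_BV + λ‖v‖_{Lip*})`. -/
theorem minimizer_characterization
    {X : Type*} [NormedAddCommGroup X] [InnerProductSpace ℝ X]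
    (J L : X → ℝ) (H : Submodule ℝ X) (α lam : ℝ) (hα : 0 < α) (hlam : 0 < lam)
    (hJnn : ∀ x, 0 ≤ J x) (hLnn : ∀ x, 0 ≤ L x)
    (hJhom : ∀ (c : ℝ) (x : X), J (c • x) = |c| * J x)
    (hLhom : ∀ (c : ℝ) (x : X), L (c • x) = |c| * L x)
    (hJconv : ConvexOn ℝ Set.univ J) (hLconv : ConvexOn ℝ Set.univ L)
    (f u v : X) (hv : v ∈ H)
    (hstar : 1 / α < starNorm J L H lam f)
    (hmin : ∀ u' v' : X, v' ∈ H →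
      Fen J L α lam f u v ≤ Fen J L α lam f u' v') :
    starNorm J L H lam (f - u - v) = 1 / α ∧
    ⟪f - u - v, u + v⟫ = (1 / α) * (J u + lam * L v) := by
  -- First-order condition in every direction
  have key : ∀ g h : X, h ∈ H → α * ⟪f - u - v, g + h⟫ ≤ J g + lam * L h := by
    intro g h hh
    have main : ∀ ε : ℝ, 0 < ε → ε ≤ 1 →
        0 ≤ ε * (J g + lam * L h - α * ⟪f - u - v, g + h⟫)
          + ε^2 * (α/2 * ‖g + h‖^2) := by
      intro ε hε hε1
      have hmin' := hmin (u + ε • g) (v + ε • h) (H.add_mem hv (H.smul_mem ε hh))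
      simp only [Fen] at hmin'
      have hJu : J (u + ε • g) ≤ J u + ε * J g := by
        have := subadd' hJhom hJconv u (ε • g)
        rwa [hJhom ε g, abs_of_pos hε] at this
      have hLv : lam * L (v + ε • h) ≤ lam * (L v + ε * L h) := by
        have h1 : L (v + ε • h) ≤ L v + ε * L h := by
          have := subadd' hLhom hLconv v (ε • h)
          rwa [hLhom ε h, abs_of_pos hε] at this
        exact mul_le_mul_of_nonneg_left h1 hlam.le
      have hvec : f - (u + ε • g) - (v + ε • h) = (f - u - v) - ε • (g + h) := by
        module
      have hnorm : ‖(f - u - v) - ε • (g + h)‖^2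
          = ‖f - u - v‖^2 - 2 * (ε * ⟪f - u - v, g + h⟫) + ε^2 * ‖g + h‖^2 := by
        rw [norm_sub_sq_real, real_inner_smul_right, norm_smul, Real.norm_eq_abs,
          mul_pow, sq_abs]
      rw [hvec, hnorm] at hmin'
      nlinarith [hmin', hJu, hLv]
    have h0 := nonneg_of_eps (by positivity) main
    linarith
  -- Equality in the direction (u, v)
  have keyge : J u + lam * L v ≤ α * ⟪f - u - v, u + v⟫ := by
    have main : ∀ ε : ℝ, 0 < ε → ε ≤ 1 →
        0 ≤ ε * (α * ⟪f - u - v, u + v⟫ - (J u + lam * L v))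
          + ε^2 * (α/2 * ‖u + v‖^2) := by
      intro ε hε hε1
      have hmin' := hmin ((1-ε) • u) ((1-ε) • v) (H.smul_mem _ hv)
      simp only [Fen] at hmin'
      have hJ : J ((1-ε) • u) = (1-ε) * J u := by
        rw [hJhom, abs_of_nonneg (by linarith)]
      have hL : L ((1-ε) • v) = (1-ε) * L v := by
        rw [hLhom, abs_of_nonneg (by linarith)]
      have hvec : f - (1-ε) • u - (1-ε) • v = (f - u - v) + ε • (u + v) := by
        module
      have hnorm : ‖(f - u - v) + ε • (u + v)‖^2
          = ‖f - u - v‖^2 + 2 * (ε * ⟪f - u - v, u + v⟫) + ε^2 * ‖u + v‖^2 := by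
        rw [norm_add_sq_real, real_inner_smul_right, norm_smul, Real.norm_eq_abs,
          mul_pow, sq_abs]
      rw [hJ, hL, hvec, hnorm] at hmin'
      nlinarith [hmin']
    have h0 := nonneg_of_eps (by positivity) main
    linarith
  have keyeq : ⟪f - u - v, u + v⟫ = (1/α) * (J u + lam * L v) := by
    have hle := key u v hv
    field_simp
    linarith
  -- Upper bound for the star norm of the residual
  have hbddw : ∀ r ∈ {r : ℝ | ∃ g h : X, h ∈ H ∧ J g + lam * L h ≠ 0 ∧
      r = ⟪f - u - v, g + h⟫ / (J g + lam * L h)}, r ≤ 1/α := by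
    rintro r ⟨g, h, hh, hD, rfl⟩
    have hDpos : 0 < J g + lam * L h :=
      lt_of_le_of_ne (add_nonneg (hJnn g) (mul_nonneg hlam.le (hLnn h))) (Ne.symm hD)
    rw [div_le_div_iff₀ hDpos hα]
    have := key g h hh
    linarith
  have hub : starNorm J L H lam (f - u - v) ≤ 1/α := by
    unfold starNorm
    exact Real.sSup_le hbddw (by positivity)
  -- Lower bound
  have hE0 : 0 ≤ J u + lam * L v :=
    add_nonneg (hJnn u) (mul_nonneg hlam.le (hLnn v))
  have hlb : 1/α ≤ starNorm J L H lam (f - u - v) := by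
    rcases eq_or_lt_of_le hE0 with hE | hE
    · -- degenerate case: J u + lam * L v = 0, contradict hstar
      exfalso
      have hJu0 : J u = 0 :=
        le_antisymm (by nlinarith [mul_nonneg hlam.le (hLnn v)]) (hJnn u)
      have hLv0 : L v = 0 := by
        have : lam * L v = 0 := by linarith
        exact (mul_eq_zero.mp this).resolve_left (ne_of_gt hlam)
      have hwp : ⟪f - u - v, u + v⟫ = 0 := by
        rw [keyeq, ← hE, mul_zero]
      set S := {r : ℝ | ∃ g h : X, h ∈ H ∧ J g + lam * L h ≠ 0 ∧
        r = ⟪f, g + h⟫ / (J g + lam * L h)} with hSdef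
      have hSeq : starNorm J L H lam f = sSup S := rfl
      have hαpos : 0 < 1/α := by positivity
      have hSne : S.Nonempty := by
        by_contra hne
        rw [Set.not_nonempty_iff_eq_empty] at hne
        rw [hSeq, hne, Real.sSup_empty] at hstar
        linarith
      have hSbdd : BddAbove S := by
        by_contra hnb
        rw [hSeq, Real.sSup_of_not_bddAbove hnb] at hstar
        linarith
      obtain ⟨r₀, g₀, h₀, hh₀, hD₀, hr₀⟩ := hSne
      have hD₀pos : 0 < J g₀ + lam * L h₀ :=
        lt_of_le_of_ne (add_nonneg (hJnn g₀) (mul_nonneg hlam.le (hLnn h₀))) (Ne.symm hD₀)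
      have hJnu : J (-u) = 0 := by
        have := hJhom (-1) u
        rw [neg_one_smul] at this
        simp [this, hJu0]
      have hLnv : L (-v) = 0 := by
        have := hLhom (-1) v
        rw [neg_one_smul] at this
        simp [this, hLv0]
      -- for any null pair (a,b), ⟪f, a + b⟫ ≤ 0
      have main2 : ∀ a b : X, J a = 0 → L b = 0 → b ∈ H → ⟪f, a + b⟫ ≤ 0 := by
        intro a b hJa hLb hb
        apply nonpos_of_eps
          (C := (J g₀ + lam * L h₀) * sSup S - ⟪f, g₀ + h₀⟫)
        intro ε hε
        have hJab : J (a + ε • g₀) = ε * J g₀ := by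
          rw [null_add' hJhom hJconv hJa, hJhom, abs_of_pos hε]
        have hLab : L (b + ε • h₀) = ε * L h₀ := by
          rw [null_add' hLhom hLconv hLb, hLhom, abs_of_pos hε]
        have hDε : J (a + ε • g₀) + lam * L (b + ε • h₀)
            = ε * (J g₀ + lam * L h₀) := by
          rw [hJab, hLab]; ring
        have hεD : 0 < ε * (J g₀ + lam * L h₀) := mul_pos hε hD₀pos
        have hmem : ⟪f, (a + ε • g₀) + (b + ε • h₀)⟫
            / (ε * (J g₀ + lam * L h₀)) ∈ S := by
          refine ⟨a + ε • g₀, b + ε • h₀,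
            H.add_mem hb (H.smul_mem ε hh₀), ?_, ?_⟩
          · rw [hDε]; exact ne_of_gt hεD
          · rw [hDε]
        have hle := le_csSup hSbdd hmem
        rw [div_le_iff₀ hεD] at hle
        have hinner : ⟪f, (a + ε • g₀) + (b + ε • h₀)⟫
            = ⟪f, a + b⟫ + ε * ⟪f, g₀ + h₀⟫ := by
          rw [show (a + ε • g₀) + (b + ε • h₀) = (a + b) + ε • (g₀ + h₀) by module,
            inner_add_right, real_inner_smul_right]
        rw [hinner] at hle
        nlinarith [hle]
      have h1 : ⟪f, u + v⟫ ≤ 0 := main2 u v hJu0 hLv0 hv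
      have h2 : ⟪f, -u + -v⟫ ≤ 0 := main2 (-u) (-v) hJnu hLnv (H.neg_mem hv)
      have hfp : ⟪f, u + v⟫ = 0 := by
        rw [show (-u + -v : X) = -(u + v) by module, inner_neg_right] at h2
        linarith
      have hsplit : ⟪f - u - v, u + v⟫ = ⟪f, u + v⟫ - ⟪u + v, u + v⟫ := by
        rw [show f - u - v = f - (u + v) by module, inner_sub_left]
      have hself : ⟪(u + v : X), u + v⟫ = 0 := by
        rw [hsplit, hfp] at hwp
        linarith
      have hpz : u + v = 0 := inner_self_eq_zero.mp hself
      have hres : f - u - v = f := by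
        rw [sub_sub, hpz, sub_zero]
      rw [hres] at hub
      linarith
    · -- nondegenerate case: the ratio at (u,v) equals 1/α
      have hmem : 1/α ∈ {r : ℝ | ∃ g h : X, h ∈ H ∧ J g + lam * L h ≠ 0 ∧
          r = ⟪f - u - v, g + h⟫ / (J g + lam * L h)} := by
        refine ⟨u, v, hv, ne_of_gt hE, ?_⟩
        rw [keyeq, mul_div_assoc, div_self (ne_of_gt hE), mul_one]
      exact le_csSup ⟨1/α, hbddw⟩ hmem
  exact ⟨le_antisymm hub hlb, keyeq⟩
end

section
/- Conversely, if w = f−u−v satisfies ‖w‖_{*,λ} = 1/α and α⟨w, u+v⟩ = |u|_BV + λ‖v‖_{Lip*}, then (u,v) is a minimizer of F(u,v) = |u|_BV + (α/2)‖f−u−v‖² + λ‖v‖_{Lip*}. -/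
open MeasureTheory RealInnerProductSpace

/-- Subadditivity from convexity and absolute homogeneity. -/
lemma subadd_of_convex_homog {X : Type*} [AddCommGroup X] [Module ℝ X]
    (J : X → ℝ) (hhom : ∀ (c : ℝ) (x : X), J (c • x) = |c| * J x)
    (hconv : ConvexOn ℝ Set.univ J) (a b : X) : J (a + b) ≤ J a + J b := by
  have h := hconv.2 (Set.mem_univ a) (Set.mem_univ b)
    (by norm_num : (0:ℝ) ≤ 1/2) (by norm_num : (0:ℝ) ≤ 1/2) (by norm_num)
  have h2 : J (a + b) = 2 * J ((1/2 : ℝ) • a + (1/2 : ℝ) • b) := by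
    rw [show a + b = (2:ℝ) • ((1/2 : ℝ) • a + (1/2 : ℝ) • b) by module, hhom]
    norm_num
  simp only [smul_eq_mul] at h
  nlinarith [h, h2]

open MeasureTheory RealInnerProductSpace in
/-- Converse characterization: if `w = f−u−v` satisfies `‖w‖_{*,λ} = 1/α` and
`α⟨w, u+v⟩ = |u|_BV + λ‖v‖_{Lip*}`, then `(u,v)` is a minimizer of
`F(u,v) = |u|_BV + (α/2)‖f−u−v‖² + λ‖v‖_{Lip*}` over `BV × H`. -/
theorem minimizer_of_characterization
    {X : Type*} [NormedAddCommGroup X] [InnerProductSpace ℝ X]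
    (J L : X → ℝ) (H : Submodule ℝ X) (α lam : ℝ) (hα : 0 < α) (hlam : 0 < lam)
    (hJnn : ∀ x, 0 ≤ J x) (hLnn : ∀ x, 0 ≤ L x)
    (hJhom : ∀ (c : ℝ) (x : X), J (c • x) = |c| * J x)
    (hLhom : ∀ (c : ℝ) (x : X), L (c • x) = |c| * L x)
    (hJconv : ConvexOn ℝ Set.univ J) (hLconv : ConvexOn ℝ Set.univ L)
    (f u v : X) (hv : v ∈ H)
    (hstar : starNorm J L H lam (f - u - v) = 1 / α)
    (hpair : α * ⟪f - u - v, u + v⟫ = J u + lam * L v) :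
    ∀ u' v' : X, v' ∈ H → Fen J L α lam f u v ≤ Fen J L α lam f u' v' := by
  intro u' v' hv'
  set w := f - u - v with hw
  have hJsub := subadd_of_convex_homog J hJhom hJconv
  have hLsub := subadd_of_convex_homog L hLhom hLconv
  have hJneg : ∀ a, J (-a) = J a := fun a => by
    simpa using hJhom (-1) a
  have hLneg : ∀ a, L (-a) = L a := fun a => by
    simpa using hLhom (-1) a
  set S := {r : ℝ | ∃ g h : X, h ∈ H ∧ J g + lam * L h ≠ 0 ∧
    r = ⟪w, g + h⟫ / (J g + lam * L h)} with hS
  have hsSup : sSup S = 1 / α := hstar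
  have hαne : (1:ℝ)/α ≠ 0 := by positivity
  have hSne : S.Nonempty := by
    by_contra h
    rw [Set.not_nonempty_iff_eq_empty] at h
    rw [h, Real.sSup_empty] at hsSup; exact hαne hsSup.symm
  have hSbdd : BddAbove S := by
    by_contra h
    rw [Real.sSup_of_not_bddAbove h] at hsSup; exact hαne hsSup.symm
  have key0 : ∀ g h : X, h ∈ H → J g + lam * L h ≠ 0 →
      α * ⟪w, g + h⟫ ≤ J g + lam * L h := by
    intro g h hh hne
    have hmem : ⟪w, g + h⟫ / (J g + lam * L h) ∈ S := ⟨g, h, hh, hne, rfl⟩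
    have hle := le_csSup hSbdd hmem
    rw [hsSup] at hle
    have hD : 0 < J g + lam * L h := by
      rcases lt_or_eq_of_le (add_nonneg (hJnn g) (mul_nonneg hlam.le (hLnn h)) : (0:ℝ) ≤ J g + lam * L h) with h' | h'
      · exact h'
      · exact absurd h'.symm hne
    rw [div_le_div_iff₀ hD hα] at hle
    nlinarith [hle]
  have key : ∀ g h : X, h ∈ H → α * ⟪w, g + h⟫ ≤ J g + lam * L h := by
    intro g h hh
    by_cases hne : J g + lam * L h ≠ 0
    · exact key0 g h hh hne
    · push_neg at hne
      have hJg : J g = 0 := by nlinarith [hJnn g, hLnn h]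
      have hLh : L h = 0 := by nlinarith [hJnn g, hLnn h]
      obtain ⟨r, g0, h0, hh0, hD0, -⟩ := hSne
      have hbound : ∀ t : ℝ, 0 < t →
          α * (t * ⟪w, g + h⟫ + ⟪w, g0 + h0⟫) ≤ J g0 + lam * L h0 := by
        intro t ht
        have hJt0 : J (t • g) = 0 := by rw [hJhom]; rw [hJg]; ring
        have hLt0 : L (t • h) = 0 := by rw [hLhom]; rw [hLh]; ring
        have hJt : J (t • g + g0) = J g0 := by
          have h1 : J (t • g + g0) ≤ J g0 := by
            have := hJsub (t • g) g0; rw [hJt0] at this; linarith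
          have h2 : J g0 ≤ J (t • g + g0) := by
            have := hJsub (t • g + g0) (-(t • g))
            rw [hJneg, hJt0] at this
            simpa using this
          linarith
        have hLt : L (t • h + h0) = L h0 := by
          have h1 : L (t • h + h0) ≤ L h0 := by
            have := hLsub (t • h) h0; rw [hLt0] at this; linarith
          have h2 : L h0 ≤ L (t • h + h0) := by
            have := hLsub (t • h + h0) (-(t • h))
            rw [hLneg, hLt0] at this
            simpa using this
          linarith
        have hmem : (t • h + h0) ∈ H := H.add_mem (H.smul_mem t hh) hh0
        have hne' : J (t • g + g0) + lam * L (t • h + h0) ≠ 0 := by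
          rw [hJt, hLt]; exact hD0
        have := key0 (t • g + g0) (t • h + h0) hmem hne'
        rw [hJt, hLt] at this
        have heq : ⟪w, t • g + g0 + (t • h + h0)⟫
            = t * ⟪w, g + h⟫ + ⟪w, g0 + h0⟫ := by
          rw [show t • g + g0 + (t • h + h0) = t • (g + h) + (g0 + h0) by module]
          rw [inner_add_right, real_inner_smul_right]
        rw [heq] at this
        exact this
      rw [hne]
      set c := ⟪w, g + h⟫ with hc
      by_contra hpos
      push_neg at hpos
      have hαc : 0 < α * c := hpos
      have hcpos : 0 < c := by nlinarith
      set K := J g0 + lam * L h0 - α * ⟪w, g0 + h0⟫ with hK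
      set t := (|K| + 1) / (α * c) with ht
      have ht0 : 0 < t := by positivity
      have hb := hbound t ht0
      have htc : α * (t * c) = |K| + 1 := by
        rw [ht]; field_simp
      nlinarith [abs_nonneg K, le_abs_self K, hb, htc]
  have hkey' := key u' v' hv'
  have hd : f - u' - v' = w - ((u' + v') - (u + v)) := by rw [hw]; abel
  simp only [Fen]
  rw [← hw, hd]
  have hexp : ‖w - ((u' + v') - (u + v))‖^2
      = ‖w‖^2 - 2 * ⟪w, (u' + v') - (u + v)⟫ + ‖(u' + v') - (u + v)‖^2 := by
    rw [@norm_sub_sq_real]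
  rw [inner_sub_right] at hexp
  rw [hexp]
  have hN : (0:ℝ) ≤ α / 2 * ‖(u' + v') - (u + v)‖^2 := by positivity
  nlinarith [hkey', hpair, hN]
end
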